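/- arXiv:1808.06326 — 4 statements merged into one kernel-verified Lean document; each statement's English description precedes it below -/
import Mathlib

section
/- Let F be a differential field of characteristic zero and K ⊆ F a differential subfield such that F is a finite (algebraic) extension of K and the field of constants of F equals the field of constants C of K. Suppose f ∈ K can be written as f = g₀' + Σ_{i=1}^q λ_i·g_i'/g_i with g₀ ∈ F, g₁, …, g_q ∈ F nonzero, and λ₁, …, λ_q ∈ C. Then f can be written in the same form with all data in K: there exist r₀ ∈ K, nonzero r₁, …, r_m ∈ K and constants μ₁, …, μ_m ∈ C such that f = r₀' + Σ_{j=1}^m μ_j·r_j'/r_j. -/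
/-!
Once `D` is packaged as a derivation of `F` restricting to `K`, this is Mathlib's
`isLiouville_of_finiteDimensional`. Its proof passes to a normal closure, where the
automorphisms over `K` commute with the derivation (derivations extend uniquely along finite
separable extensions); averaging the representation over them replaces `g₀` by a normalized
trace and each `gᵢ` by a norm, both of which lie in `K`. What remains is bookkeeping: the
representation it returns is indexed by an arbitrary finite type and may contain zero
arguments, which contribute nothing since `0′ / 0 = 0`.
-/

open Differential

@[reducible]
def Differential.ofLeibniz {R : Type*} [CommRing R] (D : R → R)
    (hadd : ∀ a b, D (a + b) = D a + D b) (hmul : ∀ a b, D (a * b) = a * D b + b * D a) :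
    Differential R :=
  ⟨Derivation.mk' (AddMonoidHom.mk' D hadd).toIntLinearMap hmul⟩

namespace Differential

variable {R : Type*} [Field R] [Differential R]

lemma logDeriv_ite_eq_zero [DecidableEq R] (x : R) :
    logDeriv (if x = 0 then 1 else x) = logDeriv x := by
  split_ifs with hx <;> simp [hx]

theorem exists_fin_sum_logDeriv_ne_zero {ι : Type*} [Fintype ι] (u c : ι → R) :
    ∃ (m : ℕ) (u₀ c₀ : Fin m → R), (∀ j, u₀ j ≠ 0) ∧ (∀ j, ∃ i, c₀ j = c i) ∧
      ∑ j, c₀ j * logDeriv (u₀ j) = ∑ i, c i * logDeriv (u i) := by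
  classical
  let e := (Fintype.equivFin ι).symm
  refine ⟨Fintype.card ι, fun j => if u (e j) = 0 then 1 else u (e j), c ∘ e,
    fun j => ?_, fun j => ⟨e j, rfl⟩, ?_⟩
  · dsimp only
    split_ifs with h
    exacts [one_ne_zero, h]
  · simp only [Function.comp_apply, logDeriv_ite_eq_zero]
    exact e.sum_comp fun i => c i * logDeriv (u i)

end Differential

namespace Subfield

variable {F : Type*} [Field F] [Differential F] (K : Subfield F)

@[reducible]
def differential (hK : ∀ x ∈ K, x′ ∈ K) : Differential K :=
  .ofLeibniz (fun a => ⟨a.1′, hK _ a.2⟩) (fun _ _ => Subtype.ext (map_add _ _ _))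
    (fun _ _ => Subtype.ext (Derivation.leibniz _ _ _))

lemma differentialAlgebra (hK : ∀ x ∈ K, x′ ∈ K) :
    letI := K.differential hK; DifferentialAlgebra K F :=
  letI := K.differential hK; ⟨fun _ => rfl⟩

theorem exists_logDeriv_repr [CharZero F] [FiniteDimensional K F] (hK : ∀ x ∈ K, x′ ∈ K)
    {a : F} (ha : a ∈ K) {ι : Type} [Fintype ι] (u c : ι → F) (v : F)
    (hc : ∀ i, c i ∈ K ∧ (c i)′ = 0) (h : a = v′ + ∑ i, c i * logDeriv (u i)) :
    ∃ (m : ℕ) (v₀ : F) (u₀ c₀ : Fin m → F), v₀ ∈ K ∧ (∀ j, u₀ j ∈ K ∧ u₀ j ≠ 0) ∧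
      (∀ j, c₀ j ∈ K ∧ (c₀ j)′ = 0) ∧ a = v₀′ + ∑ j, c₀ j * logDeriv (u₀ j) := by
  let _ := K.differential hK
  have := K.differentialAlgebra hK
  obtain ⟨ι₀, _, c₀, hc₀, u₀, v₀, h₀⟩ := IsLiouville.isLiouville (F := K) (K := F)
    ⟨a, ha⟩ ι (fun i => ⟨c i, (hc i).1⟩) (fun i => Subtype.ext (hc i).2) u v
    (by rwa [add_comm] at h)
  obtain ⟨m, u₁, c₁, hu₁, hc₁, hsum⟩ := exists_fin_sum_logDeriv_ne_zero u₀ c₀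
  refine ⟨m, v₀, fun j => u₁ j, fun j => c₁ j, v₀.2, fun j => ⟨(u₁ j).2, by simpa using hu₁ j⟩,
    fun j => ⟨(c₁ j).2, ?_⟩, ?_⟩
  · obtain ⟨i, hi⟩ := hc₁ j
    exact congrArg Subtype.val (hi ▸ hc₀ i)
  · have h₁ := congrArg ((↑) : K → F) (h₀.trans (add_comm _ _))
    rw [← hsum] at h₁
    push_cast at h₁
    exact h₁

end Subfield

theorem abel_theorem_general {F : Type*} [Field F] [CharZero F] (D : F → F)
    (hadd : ∀ a b, D (a + b) = D a + D b)
    (hmul : ∀ a b, D (a * b) = a * D b + b * D a)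
    (K : Subfield F) (hK : ∀ x ∈ K, D x ∈ K)
    (hfin : FiniteDimensional K F)
    (f : F) (hf : f ∈ K)
    (q : ℕ) (g₀ : F) (g : Fin q → F) (lam : Fin q → F)
    (hlam : ∀ i, lam i ∈ K ∧ D (lam i) = 0)
    (heq : f = D g₀ + ∑ i, lam i * (D (g i) / g i)) :
    ∃ (m : ℕ) (r₀ : F) (r : Fin m → F) (mu : Fin m → F),
      r₀ ∈ K ∧ (∀ j, r j ∈ K ∧ r j ≠ 0) ∧
      (∀ j, mu j ∈ K ∧ D (mu j) = 0) ∧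
      f = D r₀ + ∑ j, mu j * (D (r j) / r j) := by
  let _ : Differential F := .ofLeibniz D hadd hmul
  exact K.exists_logDeriv_repr hK hf g lam g₀ hlam heq

/-- **Abel's Theorem** (algebraic case of the inductive step in Liouville's theorem).
Let `F` be a differential field of characteristic zero and `K ⊆ F` a differential
subfield such that `F` is a finite extension of `K` and the constants of `F` all lie
in `K` (so that the field of constants of `F` equals the field of constants `C` of `K`).
If `f ∈ K` is of the form `f = g₀' + ∑ λᵢ · gᵢ'/gᵢ` with `g₀ ∈ F`, nonzero `gᵢ ∈ F`
and constants `λᵢ ∈ C`, then `f` admits such a representation with all data in `K`. -/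
theorem abel_theorem {F : Type*} [Field F] [CharZero F] (D : F → F)
    (hadd : ∀ a b, D (a + b) = D a + D b)
    (hmul : ∀ a b, D (a * b) = a * D b + b * D a)
    (K : Subfield F) (hK : ∀ x ∈ K, D x ∈ K)
    (hfin : FiniteDimensional K F)
    (hconst : ∀ a : F, D a = 0 → a ∈ K)
    (f : F) (hf : f ∈ K)
    (q : ℕ) (g₀ : F) (g : Fin q → F) (lam : Fin q → F)
    (hg : ∀ i, g i ≠ 0)
    (hlam : ∀ i, lam i ∈ K ∧ D (lam i) = 0)
    (heq : f = D g₀ + ∑ i, lam i * (D (g i) / g i)) :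
    ∃ (m : ℕ) (r₀ : F) (r : Fin m → F) (mu : Fin m → F),
      r₀ ∈ K ∧ (∀ j, r j ∈ K ∧ r j ≠ 0) ∧
      (∀ j, mu j ∈ K ∧ D (mu j) = 0) ∧
      f = D r₀ + ∑ j, mu j * (D (r j) / r j) :=
  abel_theorem_general D hadd hmul K hK hfin f hf q g₀ g lam hlam heq
end

section
/- Let F be a differential field of characteristic zero, K ⊆ F a differential subfield, and t ∈ F an element transcendental over K with t' = a'/a for some nonzero a ∈ K (t is a logarithm over K). Assume F = K(t) and that the field of constants of F equals the field of constants C of K. If f ∈ K can be written as f = g₀' + Σ_{i=1}^q λ_i·g_i'/g_i with g₀ ∈ F, g₁, …, g_q ∈ F nonzero and λ_i ∈ C, then there exist r₀ ∈ K, nonzero r₁, …, r_m ∈ K and μ₁, …, μ_m ∈ C such that f = r₀' + Σ_{j=1}^m μ_j·r_j'/r_j. -/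
/-!
Identify `F = K(t)` with the rational functions over `K` via `X ↦ t`. On `K[X]` the
derivation becomes `δ = ∂ + t' · d/dX`, and since `F` has no new constants, `p ∤ δ p` for
every monic irreducible `p`. Factoring numerators and denominators, `∑ λᵢ gᵢ'/gᵢ` is a
combination of logarithmic derivatives from `K` plus `∑ νₚ p'/p`. Fix `p`: if `g₀` had a
pole of order `n ≥ 1` at `p`, then `g₀'` would have one of order `n + 1 ≥ 2`, which `νₚ p'/p`
and the terms regular at `p` cannot cancel; so `g₀` is regular at `p`, and then `νₚ = 0`
because `p'/p` has a simple pole there. Hence `g₀ ∈ K[t]`, and `g₀' ∈ K` forces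
`g₀ = c t + b` with `c` constant, so that `g₀' = b' + c a'/a`.
-/

open Polynomial Differential
open scoped Differential

section PolynomialDerivation

variable {A : Type*} [CommRing A] [Differential A]

lemma implicitDeriv_apply (v p : A[X]) :
    implicitDeriv v p = mapCoeffs p + v * derivative p := by
  simp [implicitDeriv]

lemma coeff_implicitDeriv_C (u : A) (p : A[X]) (n : ℕ) :
    (implicitDeriv (C u) p).coeff n = (p.coeff n)′ + u * (p.coeff (n + 1) * (n + 1)) := by
  simp [implicitDeriv_apply, coeff_derivative]

lemma derivative_implicitDeriv_C (u : A) (p : A[X]) :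
    derivative (implicitDeriv (C u) p) = implicitDeriv (C u) (derivative p) := by
  ext n
  have hn : ((n : A) + 1)′ = 0 := by exact_mod_cast Derivation.map_natCast _ (n + 1)
  simp only [coeff_derivative, coeff_implicitDeriv_C, Derivation.leibniz, hn, smul_eq_mul]
  push_cast
  ring

lemma degree_implicitDeriv_C_lt (u : A) {p : A[X]} (hp : p.Monic) (h : 0 < p.natDegree) :
    (implicitDeriv (C u) p).degree < p.degree := by
  rw [degree_eq_natDegree (ne_zero_of_natDegree_gt h), degree_lt_iff_coeff_zero]
  intro m hm
  rw [coeff_implicitDeriv_C, coeff_eq_zero_of_natDegree_lt (by omega : p.natDegree < m + 1)]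
  rcases hm.eq_or_lt with rfl | hm
  · simp [hp.coeff_natDegree]
  · simp [coeff_eq_zero_of_natDegree_lt hm]

end PolynomialDerivation

section Localization

variable {K L : Type*} [Field K] [Field L] [Algebra K L] {t : L}

variable (t) in
/-- The image of the localization of `K[X]` at `p` under `X ↦ t`: the elements of `K(t)` without
a pole at `p`. -/
def regularAt {p : K[X]} (hp : Prime p) : Subalgebra K L where
  carrier := {x | ∃ A B : K[X], ¬p ∣ B ∧ x * aeval t B = aeval t A}
  mul_mem' := by
    rintro x y ⟨A, B, hB, hx⟩ ⟨A', B', hB', hy⟩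
    exact ⟨A * A', B * B', hp.not_dvd_mul hB hB', by simp only [map_mul, ← hx, ← hy]; ring⟩
  add_mem' := by
    rintro x y ⟨A, B, hB, hx⟩ ⟨A', B', hB', hy⟩
    exact ⟨A * B' + A' * B, B * B', hp.not_dvd_mul hB hB',
      by simp only [map_mul, map_add, ← hx, ← hy]; ring⟩
  algebraMap_mem' c := ⟨C c, 1, hp.not_dvd_one, by simp⟩

lemma notMem_regularAt (htr : Transcendental K t) {p : K[X]} (hp : Prime p) {y : L}
    {M N : K[X]} (h : y * aeval t N = aeval t M) (hN : p ∣ N) (hM : ¬p ∣ M) :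
    y ∉ regularAt t hp := by
  rintro ⟨A, B, hB, hy⟩
  have : M * B = A * N := transcendental_iff_injective.1 htr (by
    simp only [map_mul, ← h, ← hy]; ring)
  exact hp.not_dvd_mul hM hB (this ▸ dvd_mul_of_dvd_right hN A)

lemma aeval_ne_zero_of_transcendental (htr : Transcendental K t) {A : K[X]} (hA : A ≠ 0) :
    aeval t A ≠ 0 :=
  fun h ↦ hA (transcendental_iff_injective.1 htr (h.trans (map_zero _).symm))

lemma exists_isRelPrime_mul_aeval_eq (htr : Transcendental K t)
    (hgen : IntermediateField.adjoin K {t} = ⊤) (x : L) :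
    ∃ A B : K[X], B ≠ 0 ∧ IsRelPrime A B ∧ x * aeval t B = aeval t A := by
  classical
  obtain ⟨A, B, rfl⟩ :=
    (IntermediateField.mem_adjoin_simple_iff K (α := t) x).1 (by rw [hgen]; trivial)
  rcases eq_or_ne B 0 with rfl | hB
  · exact ⟨0, 1, one_ne_zero, isRelPrime_zero_left.2 isUnit_one, by simp⟩
  obtain ⟨A', B', hA, hB', hAB⟩ := extract_gcd A B
  set g := gcd A B
  have hg : g ≠ 0 := fun h ↦ hB (by rw [hB', h, zero_mul])
  have hB'0 : B' ≠ 0 := fun h ↦ hB (by rw [hB', h, mul_zero])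
  refine ⟨A', B', hB'0, gcd_isUnit_iff_isRelPrime.1 hAB, ?_⟩
  rw [hA, hB', map_mul, map_mul, mul_div_mul_left _ _ (aeval_ne_zero_of_transcendental htr hg),
    div_mul_cancel₀ _ (aeval_ne_zero_of_transcendental htr hB'0)]

lemma exists_mul_aeval_pow_mul_eq_of_notMem_regularAt (htr : Transcendental K t)
    (hgen : IntermediateField.adjoin K {t} = ⊤) {p : K[X]} (hp : Prime p) {x : L}
    (hx : x ∉ regularAt t hp) :
    ∃ (A B : K[X]) (n : ℕ), ¬p ∣ A ∧ ¬p ∣ B ∧ x * aeval t (p ^ (n + 1) * B) = aeval t A := by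
  obtain ⟨A, B, hB, hAB, h⟩ := exists_isRelPrime_mul_aeval_eq htr hgen x
  have hpB : p ∣ B := by
    by_contra hpB
    exact hx ⟨A, B, hpB, h⟩
  obtain ⟨n, B₁, hpB₁, rfl⟩ := WfDvdMonoid.max_power_factor' hB hp.not_isUnit
  cases n with
  | zero => exact absurd (by simpa using hpB) hpB₁
  | succ n => exact ⟨A, B₁, n, fun hpA ↦ hp.not_isUnit (hAB hpA hpB), hpB₁, h⟩

lemma mem_range_aeval_of_forall_mem_regularAt (htr : Transcendental K t)
    (hgen : IntermediateField.adjoin K {t} = ⊤) {x : L}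
    (hx : ∀ p : K[X], p.Monic → ∀ hirr : Irreducible p, x ∈ regularAt t hirr.prime) :
    ∃ U : K[X], aeval t U = x := by
  classical
  obtain ⟨A, B, hB, hAB, h⟩ := exists_isRelPrime_mul_aeval_eq htr hgen x
  by_cases hBu : IsUnit B
  · obtain ⟨b, hb, rfl⟩ := Polynomial.isUnit_iff.1 hBu
    refine ⟨C b⁻¹ * A, ?_⟩
    rw [map_mul, ← h, aeval_C, aeval_C, map_inv₀, mul_comm x,
      inv_mul_cancel_left₀ ((_root_.map_ne_zero _).2 hb.ne_zero)]
  obtain ⟨q, hq, hqB⟩ := WfDvdMonoid.exists_irreducible_factor hBu hB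
  have hirr : Irreducible (normalize q) := (normalize_associated q).irreducible_iff.2 hq
  have hpB : normalize q ∣ B := (normalize_associated q).dvd.trans hqB
  refine absurd (hx _ (monic_normalize hq.ne_zero) hirr)
    (notMem_regularAt htr hirr.prime h hpB fun hpA ↦ hirr.not_isUnit (hAB hpA hpB))

end Localization

lemma logDeriv_mul_self {F : Type*} [Field F] [Differential F] (x : F) :
    logDeriv x * x = x′ := by
  rcases eq_or_ne x 0 with rfl | hx
  · simp
  · exact div_mul_cancel₀ _ hx

section Primitive

variable {K L : Type*} [Field K] [Field L] [Algebra K L] [Differential K] [Differential L]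
  [DifferentialAlgebra K L] {t : L} {u : K}

lemma deriv_aeval_of_deriv_eq (ht : t′ = algebraMap K L u) (p : K[X]) :
    (aeval t p)′ = aeval t (implicitDeriv (C u) p) :=
  deriv_aeval_eq_implicitDeriv t (C u) (by rwa [aeval_C]) p

lemma natDegree_eq_zero_of_implicitDeriv_eq_zero [ContainConstants K L]
    (htr : Transcendental K t) (ht : t′ = algebraMap K L u) {p : K[X]}
    (hp : implicitDeriv (C u) p = 0) : p.natDegree = 0 := by
  obtain ⟨c, hc⟩ := mem_range_of_deriv_eq_zero K
    (by rw [deriv_aeval_of_deriv_eq ht, hp, map_zero] : (aeval t p)′ = 0)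
  rw [← transcendental_iff_injective.1 htr (by rwa [aeval_C] : aeval t (C c) = aeval t p),
    natDegree_C]

lemma not_dvd_implicitDeriv [ContainConstants K L]
    (htr : Transcendental K t) (ht : t′ = algebraMap K L u) {p : K[X]} (hp : p.Monic)
    (hirr : Irreducible p) : ¬p ∣ implicitDeriv (C u) p := by
  refine hp.not_dvd_of_degree_lt (fun h ↦ hirr.natDegree_pos.ne' ?_)
    (degree_implicitDeriv_C_lt u hp hirr.natDegree_pos)
  exact natDegree_eq_zero_of_implicitDeriv_eq_zero htr ht h

lemma natDegree_le_one_of_implicitDeriv_eq_C [CharZero K] [ContainConstants K L]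
    (htr : Transcendental K t) (ht : t′ = algebraMap K L u) {p : K[X]} {w : K}
    (hp : implicitDeriv (C u) p = C w) : p.natDegree ≤ 1 := by
  have hp' : implicitDeriv (C u) (derivative p) = 0 := by
    rw [← derivative_implicitDeriv_C, hp, derivative_C]
  have h := natDegree_eq_zero_of_implicitDeriv_eq_zero htr ht hp'
  rw [natDegree_derivative] at h
  omega

lemma logDeriv_aeval_mem_regularAt (ht : t′ = algebraMap K L u) {p q : K[X]} (hp : Prime p)
    (hq : ¬p ∣ q) : logDeriv (aeval t q) ∈ regularAt t hp :=
  ⟨implicitDeriv (C u) q, q, hq, by rw [logDeriv_mul_self, deriv_aeval_of_deriv_eq ht]⟩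

lemma eq_zero_of_mul_logDeriv_aeval_mem_regularAt (htr : Transcendental K t)
    (ht : t′ = algebraMap K L u) {p : K[X]} (hp : Prime p) (hpδ : ¬p ∣ implicitDeriv (C u) p)
    {c : K} (h : algebraMap K L c * logDeriv (aeval t p) ∈ regularAt t hp) : c = 0 := by
  by_contra hc
  refine notMem_regularAt htr hp (M := C c * implicitDeriv (C u) p) ?_ dvd_rfl ?_ h
  · rw [mul_assoc, logDeriv_mul_self, deriv_aeval_of_deriv_eq ht, map_mul, aeval_C]
  · exact hp.not_dvd_mul (fun h ↦ hp.not_isUnit (isUnit_of_dvd_unit h (isUnit_C.2 (Ne.isUnit hc))))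
      hpδ

lemma deriv_mul_aeval_sq (ht : t′ = algebraMap K L u) {x : L} {A B : K[X]}
    (h : x * aeval t B = aeval t A) :
    x′ * aeval t (B ^ 2) =
      aeval t (implicitDeriv (C u) A * B - A * implicitDeriv (C u) B) := by
  have hd := congrArg (·′) h
  simp only [Derivation.leibniz, smul_eq_mul, deriv_aeval_of_deriv_eq ht] at hd
  simp only [map_pow, map_sub, map_mul, ← h]
  linear_combination aeval t B * hd

lemma deriv_mem_regularAt (ht : t′ = algebraMap K L u) {p : K[X]} (hp : Prime p) {x : L}
    (hx : x ∈ regularAt t hp) : x′ ∈ regularAt t hp := by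
  obtain ⟨A, B, hB, h⟩ := hx
  exact ⟨_, B ^ 2, fun h ↦ hB (hp.dvd_of_dvd_pow h), deriv_mul_aeval_sq ht h⟩

lemma deriv_add_mul_logDeriv_mul_aeval_eq (htr : Transcendental K t)
    (ht : t′ = algebraMap K L u) {x : L} {A B p : K[X]} (hp : p ≠ 0) {n : ℕ}
    (h : x * aeval t (p ^ (n + 1) * B) = aeval t A) (c : K) :
    (x′ + algebraMap K L c * logDeriv (aeval t p)) * aeval t (p ^ (n + 2) * B ^ 2) =
      aeval t (p * implicitDeriv (C u) A * B - C ((n : K) + 1) * A * implicitDeriv (C u) p * B -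
        p * A * implicitDeriv (C u) B + C c * implicitDeriv (C u) p * p ^ (n + 1) * B ^ 2) := by
  have h1 := deriv_mul_aeval_sq ht h
  have h2 : logDeriv (aeval t p) * aeval t p = aeval t (implicitDeriv (C u) p) := by
    rw [logDeriv_mul_self, deriv_aeval_of_deriv_eq ht]
  refine mul_left_cancel₀ (aeval_ne_zero_of_transcendental htr (pow_ne_zero (n + 1) hp)) ?_
  simp only [Derivation.leibniz, Derivation.leibniz_pow, Nat.add_sub_cancel, smul_eq_mul,
    nsmul_eq_mul, map_mul, map_pow, map_sub, map_add, map_natCast, aeval_C] at h1 ⊢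
  push_cast at h1 ⊢
  linear_combination aeval t p * h1 +
    algebraMap K L c * aeval t p ^ (2 * n + 2) * aeval t B ^ 2 * h2

lemma deriv_add_mul_logDeriv_aeval_notMem_regularAt [CharZero K] [ContainConstants K L]
    (htr : Transcendental K t) (hgen : IntermediateField.adjoin K {t} = ⊤)
    (ht : t′ = algebraMap K L u) {p : K[X]} (hp : p.Monic) (hirr : Irreducible p) {x : L}
    (hx : x ∉ regularAt t hirr.prime) (c : K) :
    x′ + algebraMap K L c * logDeriv (aeval t p) ∉ regularAt t hirr.prime := by
  obtain ⟨A, B, n, hpA, hpB, h⟩ :=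
    exists_mul_aeval_pow_mul_eq_of_notMem_regularAt htr hgen hirr.prime hx
  refine notMem_regularAt htr hirr.prime
    (deriv_add_mul_logDeriv_mul_aeval_eq htr ht hirr.ne_zero h c)
    (dvd_mul_of_dvd_left (dvd_pow_self p (n + 1).succ_ne_zero) _) fun hM ↦ ?_
  have hn : ¬p ∣ C ((n : K) + 1) := fun h ↦
    hirr.not_isUnit (isUnit_of_dvd_unit h (isUnit_C.2 (Nat.cast_add_one_ne_zero n).isUnit))
  refine hirr.prime.not_dvd_mul (hirr.prime.not_dvd_mul (hirr.prime.not_dvd_mul hn hpA)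
    (not_dvd_implicitDeriv htr ht hp hirr)) hpB ?_
  set δ := implicitDeriv (C u)
  -- modulo `p`, the numerator reduces to `-(n + 1) A (δ p) B`
  have hM' : C ((n : K) + 1) * A * δ p * B =
      p * (δ A * B - A * δ B + C c * δ p * p ^ n * B ^ 2) -
        (p * δ A * B - C ((n : K) + 1) * A * δ p * B - p * A * δ B +
          C c * δ p * p ^ (n + 1) * B ^ 2) := by ring
  exact hM' ▸ dvd_sub (dvd_mul_right _ _) hM

variable (K t) in
def monicIrreducibleLogDerivSpan : Submodule K L :=
  Submodule.span K ((fun p : K[X] ↦ logDeriv (aeval t p)) '' {p | p.Monic ∧ Irreducible p})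

open UniqueFactorizationMonoid in
lemma logDeriv_aeval_sub_logDeriv_leadingCoeff_mem {A : K[X]} (htr : Transcendental K t)
    (hA : A ≠ 0) :
    logDeriv (aeval t A) - algebraMap K L (logDeriv A.leadingCoeff) ∈
      monicIrreducibleLogDerivSpan K t := by
  classical
  have hfac := congrArg (aeval t) (leadingCoeff_mul_prod_normalizedFactors A)
  rw [map_mul, aeval_C, map_multiset_prod] at hfac
  have hnf : ∀ q ∈ normalizedFactors A, aeval t q ≠ 0 :=
    fun q hq ↦ aeval_ne_zero_of_transcendental htr (ne_zero_of_mem_normalizedFactors hq)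
  have hprod : ((normalizedFactors A).map (aeval t)).prod ≠ 0 :=
    Multiset.prod_ne_zero fun h ↦ by
      obtain ⟨q, hq, hq0⟩ := Multiset.mem_map.1 h
      exact hnf q hq hq0
  rw [← hfac, logDeriv_mul _ _ ((_root_.map_ne_zero _).2 (leadingCoeff_ne_zero.2 hA)) hprod,
    logDeriv_multisetProd _ hnf, logDeriv_algebraMap, add_sub_cancel_left]
  refine multiset_sum_mem _ fun y hy ↦ ?_
  obtain ⟨q, hq, rfl⟩ := Multiset.mem_map.1 hy
  refine Submodule.subset_span
    ⟨q, ⟨?_, irreducible_of_normalized_factor q hq⟩, rfl⟩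
  rw [← normalize_normalized_factor q hq]
  exact monic_normalize (ne_zero_of_mem_normalizedFactors hq)

lemma exists_logDeriv_sub_mem_monicIrreducibleLogDerivSpan (htr : Transcendental K t)
    (hgen : IntermediateField.adjoin K {t} = ⊤) (g : L) :
    ∃ r : K, logDeriv g - algebraMap K L (logDeriv r) ∈ monicIrreducibleLogDerivSpan K t := by
  rcases eq_or_ne g 0 with rfl | hg
  · exact ⟨0, by simp⟩
  obtain ⟨A, B, rfl⟩ :=
    (IntermediateField.mem_adjoin_simple_iff K (α := t) g).1 (by rw [hgen]; trivial)
  have hA : A ≠ 0 := by rintro rfl; simp at hg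
  have hB : B ≠ 0 := by rintro rfl; simp at hg
  refine ⟨A.leadingCoeff / B.leadingCoeff, ?_⟩
  rw [logDeriv_div _ _ (aeval_ne_zero_of_transcendental htr hA)
      (aeval_ne_zero_of_transcendental htr hB),
    logDeriv_div _ _ (leadingCoeff_ne_zero.2 hA) (leadingCoeff_ne_zero.2 hB), map_sub,
    sub_sub_sub_comm]
  exact sub_mem (logDeriv_aeval_sub_logDeriv_leadingCoeff_mem htr hA)
    (logDeriv_aeval_sub_logDeriv_leadingCoeff_mem htr hB)

lemma mem_regularAt_and_eq_zero_of_deriv_add_linearCombination_mem [CharZero K]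
    [ContainConstants K L] (htr : Transcendental K t) (hgen : IntermediateField.adjoin K {t} = ⊤)
    (ht : t′ = algebraMap K L u) {x : L} {l : K[X] →₀ K}
    (hl : l ∈ Finsupp.supported K K {p : K[X] | p.Monic ∧ Irreducible p})
    (h : x′ + Finsupp.linearCombination K (fun p : K[X] ↦ logDeriv (aeval t p)) l ∈
      (algebraMap K L).range)
    {p : K[X]} (hp : p.Monic) (hirr : Irreducible p) :
    x ∈ regularAt t hirr.prime ∧ l p = 0 := by
  classical
  set v := fun p : K[X] ↦ logDeriv (aeval t p)
  set O := regularAt t hirr.prime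
  have hz : Finsupp.linearCombination K v (l.erase p) ∈ O := by
    have hsupp :
        l.erase p ∈ Finsupp.supported K K ({q : K[X] | q.Monic ∧ Irreducible q} \ {p}) := by
      rw [Finsupp.mem_supported, Finsupp.support_erase, Finset.coe_erase]
      exact Set.sdiff_subset_sdiff_left hl
    refine Submodule.span_le (p := Subalgebra.toSubmodule O) |>.2 ?_
      ((Finsupp.mem_span_image_iff_linearCombination K).2 ⟨_, hsupp, rfl⟩)
    rintro _ ⟨q, ⟨⟨hq, hqirr⟩, hqp⟩, rfl⟩
    refine logDeriv_aeval_mem_regularAt ht hirr.prime fun hpq ↦ hqp ?_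
    exact (eq_of_monic_of_associated hp hq (hirr.associated_of_dvd hqirr hpq)).symm
  have hsplit : Finsupp.linearCombination K v l =
      algebraMap K L (l p) * v p + Finsupp.linearCombination K v (l.erase p) := by
    conv_lhs => rw [← Finsupp.single_add_erase p l]
    rw [map_add, Finsupp.linearCombination_single, Algebra.smul_def]
  have h1 : x′ + algebraMap K L (l p) * v p ∈ O := by
    obtain ⟨w, hw⟩ := h
    have : x′ + algebraMap K L (l p) * v p =
        algebraMap K L w - Finsupp.linearCombination K v (l.erase p) := by
      rw [hw, hsplit]; ring
    exact this ▸ sub_mem (O.algebraMap_mem w) hz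
  have hx : x ∈ O := by
    by_contra hx
    exact deriv_add_mul_logDeriv_aeval_notMem_regularAt htr hgen ht hp hirr hx (l p) h1
  refine ⟨hx, eq_zero_of_mul_logDeriv_aeval_mem_regularAt htr ht hirr.prime
    (not_dvd_implicitDeriv htr ht hp hirr) ?_⟩
  simpa using sub_mem h1 (deriv_mem_regularAt ht hirr.prime hx)

lemma eq_zero_and_exists_aeval_eq_of_deriv_add_mem_range [CharZero K] [ContainConstants K L]
    (htr : Transcendental K t) (hgen : IntermediateField.adjoin K {t} = ⊤)
    (ht : t′ = algebraMap K L u) {x y : L} (hy : y ∈ monicIrreducibleLogDerivSpan K t)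
    (h : x′ + y ∈ (algebraMap K L).range) : y = 0 ∧ ∃ U : K[X], aeval t U = x := by
  obtain ⟨l, hl, rfl⟩ := (Finsupp.mem_span_image_iff_linearCombination K).1 hy
  have key {p : K[X]} (hp : p.Monic) (hirr : Irreducible p) :=
    mem_regularAt_and_eq_zero_of_deriv_add_linearCombination_mem htr hgen ht hl h hp hirr
  refine ⟨?_, mem_range_aeval_of_forall_mem_regularAt htr hgen fun _ hp hirr ↦ (key hp hirr).1⟩
  suffices l = 0 by rw [this, map_zero]
  ext p
  by_cases hp : p.Monic ∧ Irreducible p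
  · exact (key hp.1 hp.2).2
  · exact Finsupp.notMem_support_iff.1 fun h ↦ hp (hl h)

lemma exists_eq_deriv_add_mul_of_deriv_aeval_eq [CharZero K] [ContainConstants K L]
    (htr : Transcendental K t) (ht : t′ = algebraMap K L u) {U : K[X]} {w : K}
    (h : (aeval t U)′ = algebraMap K L w) : ∃ b e : K, e′ = 0 ∧ w = b′ + e * u := by
  have hU : implicitDeriv (C u) U = C w := transcendental_iff_injective.1 htr
    (by rw [← deriv_aeval_of_deriv_eq ht, h, aeval_C])
  have h2 : U.coeff 2 = 0 := coeff_eq_zero_of_natDegree_lt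
    (by linarith [natDegree_le_one_of_implicitDeriv_eq_C htr ht hU])
  have h1 := congrArg (coeff · 1) hU
  have h0 := congrArg (coeff · 0) hU
  simp only [coeff_implicitDeriv_C, coeff_C, h2] at h1 h0
  exact ⟨U.coeff 0, U.coeff 1, by simpa using h1, by simpa [mul_comm] using h0.symm⟩

theorem exists_eq_sum_mul_logDeriv_add_deriv_add_mul [CharZero K] [ContainConstants K L]
    (htr : Transcendental K t) (hgen : IntermediateField.adjoin K {t} = ⊤)
    (ht : t′ = algebraMap K L u) {ι : Type*} [Fintype ι] (w : K) (c : ι → K) (g : ι → L)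
    (x : L)
    (h : algebraMap K L w = ∑ i, algebraMap K L (c i) * logDeriv (g i) + x′) :
    ∃ (r : ι → K) (b e : K), e′ = 0 ∧ w = ∑ i, c i * logDeriv (r i) + b′ + e * u := by
  choose r hr using fun i ↦ exists_logDeriv_sub_mem_monicIrreducibleLogDerivSpan htr hgen (g i)
  have hy : ∑ i, c i • (logDeriv (g i) - algebraMap K L (logDeriv (r i))) ∈
      monicIrreducibleLogDerivSpan K t :=
    Submodule.sum_mem _ fun i _ ↦ Submodule.smul_mem _ _ (hr i)
  have hxy : x′ + ∑ i, c i • (logDeriv (g i) - algebraMap K L (logDeriv (r i))) =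
      algebraMap K L (w - ∑ i, c i * logDeriv (r i)) := by
    simp only [h, Algebra.smul_def, mul_sub, Finset.sum_sub_distrib, map_sub, map_sum, map_mul]
    ring
  obtain ⟨hy0, U, rfl⟩ :=
    eq_zero_and_exists_aeval_eq_of_deriv_add_mem_range htr hgen ht hy ⟨_, hxy.symm⟩
  rw [hy0, add_zero] at hxy
  obtain ⟨b, e, he, hw⟩ := exists_eq_deriv_add_mul_of_deriv_aeval_eq htr ht hxy
  exact ⟨r, b, e, he, by rw [add_assoc, ← hw]; ring⟩

theorem isLiouville_of_transcendental_logarithm [CharZero K] [ContainConstants K L]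
    (htr : Transcendental K t) (hgen : IntermediateField.adjoin K {t} = ⊤) {a : K}
    (ht : t′ = logDeriv (algebraMap K L a)) : IsLiouville K L where
  isLiouville w ι _ c hc g x h := by
    obtain ⟨r, b, e, he, hw⟩ := exists_eq_sum_mul_logDeriv_add_deriv_add_mul htr hgen
      (ht.trans (logDeriv_algebraMap a)) w c g x h
    refine ⟨Option ι, inferInstance, fun i ↦ i.elim e c, fun i ↦ ?_, fun i ↦ i.elim a r, b, ?_⟩
    · cases i <;> simp [he, hc]
    · rw [hw, Fintype.sum_option]
      simp only [Option.elim]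
      ring

end Primitive

lemma exists_fin_sum_mul_logDeriv_eq {K : Type*} [Field K] [Differential K] {ι : Type*}
    [Fintype ι] (c r : ι → K) :
    ∃ (m : ℕ) (e : Fin m ≃ ι) (r' : Fin m → K), (∀ j, r' j ≠ 0) ∧
      ∑ i, c i * logDeriv (r i) = ∑ j, c (e j) * logDeriv (r' j) := by
  classical
  set e := (Fintype.equivFin ι).symm
  refine ⟨_, e, fun j ↦ if r (e j) = 0 then 1 else r (e j),
    fun j ↦ by dsimp only; split_ifs <;> simp_all, ?_⟩
  rw [← e.sum_comp]
  refine Finset.sum_congr rfl fun j _ ↦ ?_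
  dsimp only
  split_ifs with h <;> simp [h]

def derivationOfLeibniz {R : Type*} [CommRing R] (D : R → R)
    (hadd : ∀ x y, D (x + y) = D x + D y) (hmul : ∀ x y, D (x * y) = x * D y + y * D x) :
    Derivation ℤ R R :=
  Derivation.mk' (AddMonoidHom.mk' D hadd).toIntLinearMap hmul

theorem liouville_step_logarithm_general {F : Type*} [Field F] [CharZero F] (D : F → F)
    (hadd : ∀ x y, D (x + y) = D x + D y)
    (hmul : ∀ x y, D (x * y) = x * D y + y * D x)
    (K : Subfield F) (hK : ∀ x ∈ K, D x ∈ K)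
    (t : F) (htrans : Transcendental K t)
    (a : F) (haK : a ∈ K) (ht : D t = D a / a)
    (hgen : Subfield.closure ((K : Set F) ∪ {t}) = ⊤)
    (hconst : ∀ x : F, D x = 0 → x ∈ K)
    (f : F) (hf : f ∈ K)
    (q : ℕ) (g₀ : F) (g : Fin q → F) (lam : Fin q → F)
    (hlam : ∀ i, lam i ∈ K ∧ D (lam i) = 0)
    (heq : f = D g₀ + ∑ i, lam i * (D (g i) / g i)) :
    ∃ (m : ℕ) (r₀ : F) (r : Fin m → F) (mu : Fin m → F),
      r₀ ∈ K ∧ (∀ j, r j ∈ K ∧ r j ≠ 0) ∧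
      (∀ j, mu j ∈ K ∧ D (mu j) = 0) ∧
      f = D r₀ + ∑ j, mu j * (D (r j) / r j) := by
  let : Differential F := ⟨derivationOfLeibniz D hadd hmul⟩
  let : Differential K := ⟨derivationOfLeibniz (fun x : K ↦ ⟨D x, hK x x.2⟩)
    (fun x y ↦ Subtype.ext (hadd x y)) (fun x y ↦ Subtype.ext (hmul x y))⟩
  have : DifferentialAlgebra K F := ⟨fun _ ↦ rfl⟩
  have : ContainConstants K F := ⟨fun {x} hx ↦ ⟨⟨x, hconst x hx⟩, rfl⟩⟩
  have hgen' : IntermediateField.adjoin K {t} = ⊤ := by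
    refine IntermediateField.toSubfield_injective ?_
    rw [IntermediateField.adjoin_toSubfield, IntermediateField.top_toSubfield, ← hgen]
    exact congrArg (fun s ↦ Subfield.closure (s ∪ {t})) Subtype.range_coe
  obtain ⟨ι, _, c, hc, r, b, hfK⟩ :=
    (isLiouville_of_transcendental_logarithm htrans hgen' (a := ⟨a, haK⟩) ht).isLiouville
      ⟨f, hf⟩ (Fin q) (fun i ↦ ⟨lam i, (hlam i).1⟩) (fun i ↦ Subtype.ext (hlam i).2) g g₀
      (heq.trans (add_comm _ _))
  obtain ⟨m, e, r', hr', hsum⟩ := exists_fin_sum_mul_logDeriv_eq c r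
  refine ⟨m, b, fun j ↦ r' j, fun j ↦ c (e j), b.2, fun j ↦ ⟨(r' j).2, by simpa using hr' j⟩,
    fun j ↦ ⟨(c (e j)).2, congrArg Subtype.val (hc (e j))⟩, ?_⟩
  have := congrArg Subtype.val (hfK.trans (by rw [hsum]))
  push_cast [Differential.logDeriv] at this
  rw [this, add_comm]
  rfl

/-- Single-logarithm instance of the pure transcendental step (Theorem 7) in the
proof of Liouville's theorem. Let `F = K(t)` where `t` is transcendental over the
differential subfield `K` and `t' = a'/a` for some nonzero `a ∈ K` (a logarithm over
`K`), and assume the constants of `F` all lie in `K` (so the field of constants of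
`F` equals the field of constants `C` of `K`). If `f ∈ K` has the form
`f = g₀' + ∑ λᵢ · gᵢ'/gᵢ` with `g₀ ∈ F`, nonzero `gᵢ ∈ F` and constants `λᵢ ∈ C`,
then `f` admits such a representation with all data in `K`. -/
theorem liouville_step_logarithm {F : Type*} [Field F] [CharZero F] (D : F → F)
    (hadd : ∀ x y, D (x + y) = D x + D y)
    (hmul : ∀ x y, D (x * y) = x * D y + y * D x)
    (K : Subfield F) (hK : ∀ x ∈ K, D x ∈ K)
    (t : F) (htrans : Transcendental K t)
    (a : F) (haK : a ∈ K) (ha : a ≠ 0) (ht : D t = D a / a)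
    (hgen : Subfield.closure ((K : Set F) ∪ {t}) = ⊤)
    (hconst : ∀ x : F, D x = 0 → x ∈ K)
    (f : F) (hf : f ∈ K)
    (q : ℕ) (g₀ : F) (g : Fin q → F) (lam : Fin q → F)
    (hg : ∀ i, g i ≠ 0)
    (hlam : ∀ i, lam i ∈ K ∧ D (lam i) = 0)
    (heq : f = D g₀ + ∑ i, lam i * (D (g i) / g i)) :
    ∃ (m : ℕ) (r₀ : F) (r : Fin m → F) (mu : Fin m → F),
      r₀ ∈ K ∧ (∀ j, r j ∈ K ∧ r j ≠ 0) ∧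
      (∀ j, mu j ∈ K ∧ D (mu j) = 0) ∧
      f = D r₀ + ∑ j, mu j * (D (r j) / r j) :=
  liouville_step_logarithm_general D hadd hmul K hK t htrans a haK ht hgen hconst f hf q g₀ g lam
    hlam heq
end

section
/- Let K be an infinite field and K(X) the field of rational functions in one variable over K. For c ∈ K let τ_c denote the K-algebra automorphism of K(X) determined by X ↦ X + c. If f ∈ K(X) satisfies τ_c(f) = f for every c ∈ K, then f lies in K (f is a constant rational function). -/
/-!
Write `f = n / d` in lowest terms. Invariance under `X ↦ X + c` gives
`n(X + c) d(X) = n(X) d(X + c)`; evaluating at a point `a` with `d(a) ≠ 0` shows that the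
polynomial `d(a) n - n(a) d` vanishes at every `a + c`, hence everywhere, so it is zero
because `K` is infinite. Thus `f = n(a) / d(a)`.
-/

open Polynomial

theorem Polynomial.C_eval_mul_eq_C_eval_mul_of_comp_X_add_C {R : Type*} [CommRing R]
    [IsDomain R] [Infinite R] {p q : R[X]}
    (h : ∀ c, p.comp (X + C c) * q = p * q.comp (X + C c)) (a : R) :
    C (q.eval a) * p = C (p.eval a) * q := by
  refine Polynomial.funext fun x => ?_
  have hx := congrArg (eval a) (h (x - a))
  simp only [eval_mul, eval_comp, eval_add, eval_X, eval_C, add_sub_cancel] at hx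
  simp only [eval_mul, eval_C]
  linear_combination hx

namespace RatFunc

variable {K : Type*} [Field K]

noncomputable def translate (c : K) : RatFunc K ≃ₐ[K] RatFunc K :=
  IsFractionRing.algEquivOfAlgEquiv (algEquivAevalXAddC c)

theorem translate_algebraMap (c : K) (p : K[X]) :
    translate c (algebraMap K[X] (RatFunc K) p) =
      algebraMap K[X] (RatFunc K) (p.comp (Polynomial.X + Polynomial.C c)) := by
  simp [translate, IsFractionRing.algEquivOfAlgEquiv_algebraMap, comp_eq_aeval]

theorem translate_X (c : K) : translate c X = X + C c := by
  simpa [algebraMap_X, algebraMap_C] using translate_algebraMap c Polynomial.X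

theorem num_comp_mul_denom_eq_of_translate_eq_self {c : K} {f : RatFunc K}
    (hf : translate c f = f) :
    f.num.comp (Polynomial.X + Polynomial.C c) * f.denom =
      f.num * f.denom.comp (Polynomial.X + Polynomial.C c) := by
  have hdenom_comp := (comp_X_add_C_ne_zero_iff (t := c)).2 f.denom_ne_zero
  rw [← num_div_denom f, map_div₀, translate_algebraMap, translate_algebraMap,
    div_eq_div_iff (algebraMap_ne_zero hdenom_comp) (algebraMap_ne_zero f.denom_ne_zero),
    ← map_mul, ← map_mul] at hf
  exact algebraMap_injective K hf

end RatFunc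

/-- Fixed field of the translations of the variable (additive part of the
differential Galois group action in Theorem 15): if `K` is an infinite field and
`f ∈ K(X)` is fixed by every `K`-algebra automorphism `τ_c` of `K(X)` determined by
`X ↦ X + c` (`c ∈ K`), then `f` is a constant rational function, i.e. `f ∈ K`. -/
theorem fixed_by_translations_mem_base {K : Type*} [Field K] [Infinite K]
    (f : RatFunc K)
    (h : ∀ (c : K) (φ : RatFunc K ≃ₐ[K] RatFunc K),
      φ RatFunc.X = RatFunc.X + RatFunc.C c → φ f = f) :
    ∃ k : K, f = RatFunc.C k := by
  have hcross (c : K) := RatFunc.num_comp_mul_denom_eq_of_translate_eq_self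
    (h c _ (RatFunc.translate_X c))
  obtain ⟨a, ha⟩ : ∃ a, f.denom.eval a ≠ 0 := by
    by_contra! hzero
    exact f.denom_ne_zero (Polynomial.funext (by simpa using hzero))
  have hnum : f.num = C (f.num.eval a / f.denom.eval a) * f.denom := by
    have hinv : C (f.denom.eval a)⁻¹ * C (f.denom.eval a) = 1 := by
      rw [← C_mul, inv_mul_cancel₀ ha, C_1]
    rw [div_eq_mul_inv, C_mul]
    linear_combination C (f.denom.eval a)⁻¹ *
      C_eval_mul_eq_C_eval_mul_of_comp_X_add_C hcross a - f.num * hinv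
  refine ⟨f.num.eval a / f.denom.eval a, ?_⟩
  conv_lhs => rw [← RatFunc.num_div_denom f]
  rw [div_eq_iff (RatFunc.algebraMap_ne_zero f.denom_ne_zero), ← RatFunc.algebraMap_C,
    ← map_mul, ← hnum]
end

section
/- Let f : ℂ → ℂ be a function that is differentiable as a function of a complex variable at every point of ℂ \ {0} and satisfies f(z·w) = f(z) + f(w) for all nonzero z, w ∈ ℂ. Then f(z) = 0 for every nonzero z ∈ ℂ. -/
/-!
On the punctured plane the additivity `f (z * w) = f z + f w` forces `n • f ζ = f (ζ ^ n) = f 1 = 0`,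
hence `f ζ = 0`, for every root of unity `ζ`. The roots of unity `exp (2πi / n)` accumulate at `1`,
so by the identity theorem the holomorphic function `f` vanishes on the connected set `ℂ \ {0}`.
-/

open Complex Filter Topology

section MapMul

variable {M A : Type*} [MonoidWithZero M] [AddCommGroup A] {f : M → A}

theorem map_one_eq_zero_of_map_mul [Nontrivial M]
    (hmul : ∀ z w : M, z ≠ 0 → w ≠ 0 → f (z * w) = f z + f w) : f 1 = 0 := by
  simpa using hmul 1 1 one_ne_zero one_ne_zero

theorem map_pow_of_map_mul [NoZeroDivisors M]
    (hmul : ∀ z w : M, z ≠ 0 → w ≠ 0 → f (z * w) = f z + f w)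
    {z : M} (hz : z ≠ 0) (n : ℕ) : f (z ^ (n + 1)) = (n + 1) • f z := by
  induction n with
  | zero => simp
  | succ n ih => rw [pow_succ, hmul _ _ (pow_ne_zero _ hz) hz, ih, ← succ_nsmul]

theorem map_eq_zero_of_pow_eq_one_of_map_mul [Nontrivial M] [NoZeroDivisors M]
    [IsAddTorsionFree A]
    (hmul : ∀ z w : M, z ≠ 0 → w ≠ 0 → f (z * w) = f z + f w)
    {z : M} {n : ℕ} (hn : n ≠ 0) (hzn : z ^ n = 1) : f z = 0 := by
  have hz : z ≠ 0 := by rintro rfl; simp [zero_pow hn] at hzn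
  obtain ⟨m, rfl⟩ := Nat.exists_eq_succ_of_ne_zero hn
  have := map_pow_of_map_mul hmul hz m
  rw [hzn, map_one_eq_zero_of_map_mul hmul, eq_comm] at this
  exact (nsmul_eq_zero_iff_right m.succ_ne_zero).mp this

end MapMul

theorem Complex.frequently_pow_eq_one_nhdsNE_one :
    ∃ᶠ z in 𝓝[≠] (1 : ℂ), ∃ n ≠ 0, z ^ n = 1 := by
  have hlim : Tendsto (fun n : ℕ ↦ exp (2 * Real.pi * I / n)) atTop (𝓝 1) := by
    simpa [Function.comp_def] using
      (continuous_exp.tendsto 0).comp (tendsto_const_div_atTop_nhds_zero_nat _)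
  have hroot : ∀ᶠ n : ℕ in atTop, IsPrimitiveRoot (exp (2 * Real.pi * I / n)) n ∧ 1 < n := by
    filter_upwards [eventually_gt_atTop 1] with n hn
    exact ⟨isPrimitiveRoot_exp n (by omega), hn⟩
  have hne : ∀ᶠ n : ℕ in atTop, exp (2 * Real.pi * I / n) ≠ 1 :=
    hroot.mono fun n h ↦ h.1.ne_one h.2
  exact (tendsto_nhdsWithin_of_tendsto_nhds_of_eventually_within _ hlim hne).frequently
    (hroot.mono fun n h ↦ ⟨n, by omega, h.1.pow_eq_one⟩).frequently

/-- Every single-valued holomorphic homomorphism from the multiplicative group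
`ℂ*` to the additive group `ℂ` is identically zero (the global obstruction to a
logarithm underlying Corollary 11). -/
theorem holomorphic_multiplicative_to_additive_hom_is_zero (f : ℂ → ℂ)
    (hdiff : ∀ z : ℂ, z ≠ 0 → DifferentiableAt ℂ f z)
    (hmul : ∀ z w : ℂ, z ≠ 0 → w ≠ 0 → f (z * w) = f z + f w) :
    ∀ z : ℂ, z ≠ 0 → f z = 0 := by
  have hholo : DifferentiableOn ℂ f {0}ᶜ := fun z hz ↦ (hdiff z hz).differentiableWithinAt
  have hana : AnalyticOnNhd ℂ f {0}ᶜ := hholo.analyticOnNhd isOpen_compl_singleton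
  have hconn : IsPreconnected ({0}ᶜ : Set ℂ) :=
    (isConnected_compl_singleton_of_one_lt_rank (by simp [rank_real_complex]) 0).isPreconnected
  have hfreq : ∃ᶠ z in 𝓝[≠] (1 : ℂ), f z = 0 :=
    Complex.frequently_pow_eq_one_nhdsNE_one.mono fun z ⟨n, hn, hzn⟩ ↦
      map_eq_zero_of_pow_eq_one_of_map_mul hmul hn hzn
  exact fun z hz ↦
    hana.eqOn_zero_of_preconnected_of_frequently_eq_zero hconn one_ne_zero hfreq hz
end
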